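/- Let (T,*,[[·,·,·]]) be a two-dimensional left Bol algebra over ℝ whose binary operation * is not identically zero. Then every symmetric bilinear form b on T satisfying b(x*y,z) = b(x,y*z) for all x,y,z ∈ T and b([[x,y,z]],u) = b([[z,u,x]],y) for all x,y,z,u ∈ T is degenerate; in particular there is no quadratic structure on T. -/

import Mathlib

/-- A left Bol algebra over ℝ: a real vector space with a bilinear operation `mul`
and a trilinear operation `tri` satisfying (T01), (T02), (T1), (T2) and (T3). -/
structure LeftBolAlgebra (T : Type*) [AddCommGroup T] [Module ℝ T] where
  mul : T →ₗ[ℝ] T →ₗ[ℝ] T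
  tri : T →ₗ[ℝ] T →ₗ[ℝ] T →ₗ[ℝ] T
  mul_anticomm : ∀ x y : T, mul x y = - mul y x
  tri_skew : ∀ x y z : T, tri x y z = - tri y x z
  tri_cyclic : ∀ x y z : T, tri x y z + tri y z x + tri z x y = 0
  tri_leibniz : ∀ u v x y z : T,
    tri u v (tri x y z) = tri (tri u v x) y z + tri x (tri u v y) z + tri x y (tri u v z)
  bol : ∀ u v x y : T, tri u v (mul x y) =
    mul (tri u v x) y + mul x (tri u v y) + tri x y (mul u v) - mul (mul x y) (mul u v)


/-! The trilinear form `(x, y, z) ↦ b (x * y) z` vanishes when `x = y` since `*` is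
anticommutative, and invariance together with symmetry of `b` makes it cyclic, so it is
alternating. An alternating trilinear form on a two-dimensional space is zero, hence every
product `x * y` lies in the radical of `b`; a nonzero product is a nonzero radical vector. -/

namespace LinearMap

variable {R M N : Type*} [CommRing R] [AddCommGroup M] [Module R M] [AddCommGroup N] [Module R N]

def toAlternatingMap₃ (g : M →ₗ[R] M →ₗ[R] M →ₗ[R] N) (h₀₁ : ∀ x z, g x x z = 0)
    (h₀₂ : ∀ x y, g x y x = 0) (h₁₂ : ∀ x y, g x y y = 0) : M [⋀^Fin 3]→ₗ[R] N where
  toFun v := g (v 0) (v 1) (v 2)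
  -- `simp` can only decide `(1 : Fin 3) ≠ 0` etc. with the standard instance.
  map_update_add' {inst} v i x y := by
    obtain rfl := Subsingleton.elim inst (instDecidableEqFin 3)
    fin_cases i <;> simp
  map_update_smul' {inst} v i c x := by
    obtain rfl := Subsingleton.elim inst (instDecidableEqFin 3)
    fin_cases i <;> simp
  map_eq_zero_of_eq' v i j hv hij := by
    fin_cases i <;> fin_cases j <;> simp_all

theorem eq_zero_of_finrank_le_two {K : Type*} [Field K] [Module K M] [Module K N]
    [Module.Finite K M] (hM : Module.finrank K M ≤ 2) (g : M →ₗ[K] M →ₗ[K] M →ₗ[K] N)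
    (h₀₁ : ∀ x z, g x x z = 0) (h₀₂ : ∀ x y, g x y x = 0) (h₁₂ : ∀ x y, g x y y = 0)
    (x y z : M) : g x y z = 0 := by
  have hdep : ¬LinearIndependent K ![x, y, z] := fun h ↦ by
    simpa using h.fintype_card_le_finrank.trans hM
  exact (g.toAlternatingMap₃ h₀₁ h₀₂ h₁₂).map_linearDependent _ hdep

end LinearMap

theorem LeftBolAlgebra.mul_self {T : Type*} [AddCommGroup T] [Module ℝ T] (A : LeftBolAlgebra T)
    (x : T) : A.mul x x = 0 := by
  have h : (2 : ℝ) • A.mul x x = 0 := by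
    rw [two_smul]; nth_rewrite 1 [A.mul_anticomm]; exact neg_add_cancel _
  exact (smul_eq_zero.mp h).resolve_left two_ne_zero

namespace LinearMap.BilinForm

variable {K M : Type*} [Field K] [AddCommGroup M] [Module K M] {mul : M →ₗ[K] M →ₗ[K] M}
  {b : LinearMap.BilinForm K M}

theorem apply_mul_cyclic (hsymm : ∀ x y, b x y = b y x)
    (hassoc : ∀ x y z, b (mul x y) z = b x (mul y z)) (x y z : M) :
    b (mul x y) z = b (mul y z) x := by
  rw [hassoc, hsymm]

theorem apply_mul_eq_zero_of_finrank_le_two [Module.Finite K M] (hM : Module.finrank K M ≤ 2)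
    (hmul : ∀ x, mul x x = 0) (hsymm : ∀ x y, b x y = b y x)
    (hassoc : ∀ x y z, b (mul x y) z = b x (mul y z)) (x y z : M) : b (mul x y) z = 0 := by
  have h₀₁ : ∀ x z, b (mul x x) z = 0 := by simp [hmul]
  have h₁₂ : ∀ x y, b (mul x y) y = 0 := fun x y ↦ by
    rw [apply_mul_cyclic hsymm hassoc, h₀₁]
  have h₀₂ : ∀ x y, b (mul x y) x = 0 := fun x y ↦ by
    rw [apply_mul_cyclic hsymm hassoc, h₁₂]
  exact (mul.compr₂ b).eq_zero_of_finrank_le_two hM h₀₁ h₀₂ h₁₂ x y z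

end LinearMap.BilinForm

theorem no_quadratic_structure_two_dim_bol
    {T : Type*} [AddCommGroup T] [Module ℝ T] (A : LeftBolAlgebra T)
    (hdim : Module.finrank ℝ T = 2)
    (hmul : ∃ x y : T, A.mul x y ≠ 0)
    (b : LinearMap.BilinForm ℝ T) (hsymm : ∀ x y : T, b x y = b y x)
    (hassoc : ∀ x y z : T, b (A.mul x y) z = b x (A.mul y z)) :
    ∃ v : T, v ≠ 0 ∧ ∀ w : T, b v w = 0 := by
  have : Module.Finite ℝ T := Module.finite_of_finrank_pos (by omega)
  obtain ⟨x, y, hxy⟩ := hmul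
  exact ⟨A.mul x y, hxy,
    LinearMap.BilinForm.apply_mul_eq_zero_of_finrank_le_two hdim.le A.mul_self hsymm hassoc x y⟩
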